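/- arXiv:2409.06308 — 6 statements merged into one kernel-verified Lean document; each statement's English description precedes it below -/
import Mathlib

section
/- Let f : ℝ → ℝ be a twice continuously differentiable probability density function (f ≥ 0 and ∫_ℝ f(x) dx = 1) such that f, f', and f'' are uniformly continuous on ℝ. Assume f is unimodal with mode θ, i.e. f'(x) > 0 for all x < θ and f'(x) < 0 for all x > θ, and that f''(θ) < 0. Then there exists a point p > θ such that f''(x) ≤ f''(p) for all x > θ (a point of maximum convexity to the right of the mode), and moreover f''(p) > 0. -/
open Filter Set Topology


lemma barbalat (g : ℝ → ℝ) (hg : Differentiable ℝ g)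
    (huc : UniformContinuous (deriv g)) (L : ℝ)
    (hlim : Tendsto g atTop (𝓝 L)) : Tendsto (deriv g) atTop (𝓝 0) := by
  rw [Metric.tendsto_atTop]
  by_contra hc
  push_neg at hc
  obtain ⟨ε, hε, hfreq⟩ := hc
  obtain ⟨δ, hδ, hucd⟩ := Metric.uniformContinuous_iff.mp huc (ε/2) (by positivity)
  obtain ⟨N, hN⟩ := Metric.tendsto_atTop.mp hlim (ε*δ/8) (by positivity)
  obtain ⟨x, hxN, hx⟩ := hfreq N
  -- MVT on [x, x+δ/2]
  have hlt : x < x + δ/2 := by linarith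
  obtain ⟨ξ, hξ, hslope⟩ := exists_hasDerivAt_eq_slope g (deriv g) hlt
    (hg.continuous.continuousOn) (fun y _ => (hg y).hasDerivAt)
  have hdist : dist ξ x < δ := by
    rw [Real.dist_eq, abs_of_pos (by linarith [hξ.1])]
    linarith [hξ.2]
  have h1 : dist (deriv g ξ) (deriv g x) < ε/2 := hucd hdist
  have hx' : ε ≤ |deriv g x| := by simpa [Real.dist_eq] using hx
  have h2 : ε/2 ≤ |deriv g ξ| := by
    have := abs_sub_abs_le_abs_sub (deriv g x) (deriv g ξ)
    rw [Real.dist_eq] at h1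
    rw [abs_sub_comm] at h1
    linarith
  have h3 : |g (x + δ/2) - g x| = |deriv g ξ| * (δ/2) := by
    have he : g (x + δ/2) - g x = deriv g ξ * (δ/2) := by
      rw [hslope, show x + δ/2 - x = δ/2 by ring,
        div_mul_cancel₀ _ (by positivity : (δ/2:ℝ) ≠ 0)]
    rw [he, abs_mul, abs_of_pos (by linarith : (0:ℝ) < δ/2)]
  have h4 : ε*δ/4 ≤ |g (x + δ/2) - g x| := by
    rw [h3]; nlinarith
  have h5 : |g (x + δ/2) - g x| < ε*δ/4 := by
    have a1 := hN (x + δ/2) (by linarith)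
    have a2 := hN x hxN
    rw [Real.dist_eq] at a1 a2
    calc |g (x + δ/2) - g x| ≤ |g (x+δ/2) - L| + |g x - L| := by
          have := abs_sub_le (g (x+δ/2)) L (g x)
          rw [abs_sub_comm L (g x)] at this
          linarith
      _ < ε*δ/4 := by linarith
  linarith

/-- For a twice continuously differentiable unimodal probability density `f` with mode `θ`,
whose first two derivatives (and `f` itself) are uniformly continuous and with `f'' θ < 0`,
there exists a point of maximum convexity to the right of the mode, i.e. a point `p > θ`
at which `f''` attains its supremum over `(θ, ∞)`, and moreover `f'' p > 0`. -/
theorem exists_point_max_convexity_right_of_mode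
    (f : ℝ → ℝ) (θ : ℝ)
    (hf : ContDiff ℝ 2 f)
    (hnonneg : ∀ x, 0 ≤ f x)
    (hdensity : ∫ x : ℝ, f x = 1)
    (hucf : UniformContinuous f)
    (hucf' : UniformContinuous (deriv f))
    (hucf'' : UniformContinuous (deriv (deriv f)))
    (hleft : ∀ x < θ, 0 < deriv f x)
    (hright : ∀ x > θ, deriv f x < 0)
    (hmode : deriv (deriv f) θ < 0) :
    ∃ p > θ, (∀ x > θ, deriv (deriv f) x ≤ deriv (deriv f) p) ∧
      0 < deriv (deriv f) p := by
  -- basic regularity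
  have h2 : ContDiff ℝ ((1:ℕ)+1) f := by exact_mod_cast hf
  have hdf : Differentiable ℝ f := h2.differentiable (by norm_num)
  have h1 : ContDiff ℝ ((0:ℕ)+1) (deriv f) := by
    exact_mod_cast (contDiff_succ_iff_deriv.mp h2).2.2
  have hdf' : Differentiable ℝ (deriv f) := h1.differentiable (by norm_num)
  have hcf'' : Continuous (deriv (deriv f)) :=
    (contDiff_succ_iff_deriv.mp h1).2.2.continuous
  -- f is antitone on [θ, ∞)
  have hanti : AntitoneOn f (Ici θ) := by
    apply antitoneOn_of_deriv_nonpos (convex_Ici θ) hdf.continuous.continuousOn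
      (fun x _ => (hdf x).differentiableWithinAt)
    intro x hx
    rw [interior_Ici] at hx
    exact (hright x hx).le
  -- f converges at +∞
  have hfconv : ∃ L, Tendsto f atTop (𝓝 L) := by
    set g : ℝ → ℝ := fun x => f (max x θ) with hg
    have hga : Antitone g := fun a b hab =>
      hanti (le_max_right a θ) (le_max_right b θ) (max_le_max hab le_rfl)
    have hgb : BddBelow (Set.range g) :=
      ⟨0, fun y ⟨x, hx⟩ => hx ▸ hnonneg _⟩
    refine ⟨⨅ i, g i, (tendsto_atTop_ciInf hga hgb).congr' ?_⟩
    filter_upwards [eventually_ge_atTop θ] with x hx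
    simp [hg, max_eq_left hx]
  obtain ⟨L, hL⟩ := hfconv
  -- f' → 0 and f'' → 0 at +∞
  have hf'0 : Tendsto (deriv f) atTop (𝓝 0) := barbalat f hdf hucf' L hL
  have hf''0 : Tendsto (deriv (deriv f)) atTop (𝓝 0) :=
    barbalat (deriv f) hdf' hucf'' 0 hf'0
  -- there is q > θ with f'' q > 0
  have hq : ∃ q > θ, 0 < deriv (deriv f) q := by
    by_contra hcon
    push_neg at hcon
    set a := θ + 1 with ha
    have haθ : θ < a := by linarith
    have hfa' : deriv f a < 0 := hright a haθ
    set b := a + (f a + 1) / (-(deriv f a)) with hb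
    have hab : a < b := by
      rw [hb]
      exact lt_add_of_pos_right a
        (div_pos (by linarith [hnonneg a]) (by linarith))
    have hantif' : AntitoneOn (deriv f) (Icc a b) := by
      apply antitoneOn_of_deriv_nonpos (convex_Icc a b)
        hdf'.continuous.continuousOn (fun x _ => (hdf' x).differentiableWithinAt)
      intro x hx
      rw [interior_Icc] at hx
      exact hcon x (by linarith [hx.1])
    obtain ⟨ξ, hξ, hslope⟩ := exists_hasDerivAt_eq_slope f (deriv f) hab
      hdf.continuous.continuousOn (fun y _ => (hdf y).hasDerivAt)
    have hle : deriv f ξ ≤ deriv f a :=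
      hantif' (left_mem_Icc.mpr hab.le) ⟨hξ.1.le, hξ.2.le⟩ hξ.1.le
    have hbpos : 0 < b - a := by linarith
    have h5 : f b - f a ≤ deriv f a * (b - a) := by
      have := hslope ▸ hle
      calc f b - f a = (f b - f a) / (b - a) * (b - a) := by field_simp
        _ ≤ deriv f a * (b - a) := by
            apply mul_le_mul_of_nonneg_right _ hbpos.le
            rw [← hslope]; exact hle
    have hne : deriv f a ≠ 0 := ne_of_lt hfa'
    have h6 : deriv f a * (b - a) = -(f a + 1) := by
      rw [hb, add_sub_cancel_left, div_neg, mul_neg, mul_div_assoc',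
        mul_comm, mul_div_assoc, div_self hne, mul_one]
    have := hnonneg b
    rw [h6] at h5
    linarith
  obtain ⟨q, hqθ, hq0⟩ := hq
  -- eventually |f''| < f'' q
  obtain ⟨N, hN⟩ := Metric.tendsto_atTop.mp hf''0 (deriv (deriv f) q) hq0
  set M := max N q with hM
  have hθM : θ ≤ M := le_trans hqθ.le (le_max_right N q)
  -- max of f'' on [θ, M]
  obtain ⟨p, hpmem, hpmax⟩ := isCompact_Icc.exists_isMaxOn
    (nonempty_Icc.mpr hθM) hcf''.continuousOn (s := Icc θ M)
  have hqmem : q ∈ Icc θ M := ⟨hqθ.le, le_max_right N q⟩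
  have hpq : deriv (deriv f) q ≤ deriv (deriv f) p := hpmax hqmem
  have hppos : 0 < deriv (deriv f) p := lt_of_lt_of_le hq0 hpq
  have hpθ : θ < p := by
    rcases lt_or_eq_of_le hpmem.1 with h | h
    · exact h
    · exfalso; rw [← h] at hppos; linarith
  refine ⟨p, hpθ, fun x hx => ?_, hppos⟩
  rcases le_or_gt x M with h | h
  · exact hpmax ⟨hx.le, h⟩
  · have hxN : x ≥ N := le_trans (le_max_left N q) h.le
    have := hN x hxN
    rw [Real.dist_eq, sub_zero] at this
    exact le_of_lt
      (calc deriv (deriv f) x ≤ |deriv (deriv f) x| := le_abs_self _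
        _ < deriv (deriv f) q := this
        _ ≤ deriv (deriv f) p := hpq)
end

section
/- Let f : ℝ → ℝ be a twice continuously differentiable probability density function (f ≥ 0 and ∫_ℝ f(x) dx = 1) such that f, f', and f'' are uniformly continuous on ℝ. Assume f is unimodal with mode θ, i.e. f'(x) > 0 for all x < θ and f'(x) < 0 for all x > θ, and that f''(θ) < 0. Then there exists a point x < θ with f''(x) = 0, and there exists a point p < θ with f''(p) > 0 such that f''(y) ≤ f''(p) for all y < θ (an inflection point and a point of maximum convexity to the left of the mode). -/
open Filter MeasureTheory Set Topology

/-- Barbalat-type lemma: if `g` has uniformly continuous derivative `h` and `g → 0` at `-∞`,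
then `h` is eventually less than any `ε > 0` at `-∞`. -/
lemma barbalat_atBot {g h : ℝ → ℝ} (hg : ∀ x, HasDerivAt g (h x) x)
    (huc : UniformContinuous h) (hgl : Tendsto g atBot (𝓝 (0 : ℝ)))
    {ε : ℝ} (hε : 0 < ε) : ∀ᶠ x in atBot, h x < ε := by
  by_contra hcon
  rw [Filter.not_eventually] at hcon
  obtain ⟨δ, hδ, hδ'⟩ := Metric.uniformContinuous_iff.mp huc (ε / 2) (by positivity)
  set d := δ / 2 with hd
  have hdpos : 0 < d := by positivity
  have h1 : ∀ᶠ x : ℝ in atBot, |g x| < ε * d / 8 := by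
    have := Metric.tendsto_nhds.mp hgl (ε * d / 8) (by positivity)
    simpa [Real.dist_eq] using this
  have h2 : ∀ᶠ x : ℝ in atBot, |g (x + d)| < ε * d / 8 := by
    have hcomp : Tendsto (fun x : ℝ => x + d) atBot atBot :=
      tendsto_atBot_add_const_right _ _ tendsto_id
    have := Metric.tendsto_nhds.mp (hgl.comp hcomp) (ε * d / 8) (by positivity)
    simpa [Real.dist_eq] using this
  obtain ⟨x, hx, hx1, hx2⟩ := (hcon.and_eventually (h1.and h2)).exists
  push_neg at hx
  have hband : ∀ y ∈ Set.Icc x (x + d), ε / 2 ≤ h y := by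
    intro y hy
    have hdist : dist y x < δ := by
      rw [Real.dist_eq, abs_of_nonneg (by linarith [hy.1])]
      have := hy.2
      have : y - x ≤ d := by linarith
      linarith
    have h3 := hδ' hdist
    rw [Real.dist_eq] at h3
    have h4 := abs_lt.mp h3
    linarith [h4.1, h4.2]
  have hlt : x < x + d := by linarith
  have hcont : ContinuousOn g (Set.Icc x (x + d)) :=
    (continuous_iff_continuousAt.mpr fun y => (hg y).differentiableAt.continuousAt).continuousOn
  obtain ⟨c, hc, hceq⟩ := exists_hasDerivAt_eq_slope g h hlt hcont (fun y _ => hg y)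
  have hcband := hband c ⟨hc.1.le, hc.2.le⟩
  rw [hceq] at hcband
  have h5 : ε / 2 * d ≤ g (x + d) - g x := by
    have h6 : ε / 2 ≤ (g (x + d) - g x) / d := by simpa using hcband
    calc ε / 2 * d ≤ (g (x + d) - g x) / d * d := by nlinarith
      _ = g (x + d) - g x := by field_simp
  have h7 := abs_lt.mp hx1
  have h8 := abs_lt.mp hx2
  nlinarith [h7.1, h7.2, h8.1, h8.2]

/-- For a twice continuously differentiable unimodal probability density `f` with mode `θ`,
whose first two derivatives (and `f` itself) are uniformly continuous and with `f'' θ < 0`,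
there exist an inflection point (a point `x < θ` with `f'' x = 0`) and a point of maximum
convexity (a point `p < θ` with `f'' p > 0` at which `f''` attains its supremum over
`(-∞, θ)`) to the left of the mode. -/
theorem exists_inflection_and_max_convexity_left_of_mode
    (f : ℝ → ℝ) (θ : ℝ)
    (hf : ContDiff ℝ 2 f)
    (hnonneg : ∀ x, 0 ≤ f x)
    (hdensity : ∫ x : ℝ, f x = 1)
    (hucf : UniformContinuous f)
    (hucf' : UniformContinuous (deriv f))
    (hucf'' : UniformContinuous (deriv (deriv f)))
    (hleft : ∀ x < θ, 0 < deriv f x)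
    (hright : ∀ x > θ, deriv f x < 0)
    (hmode : deriv (deriv f) θ < 0) :
    (∃ x < θ, deriv (deriv f) x = 0) ∧
    (∃ p < θ, 0 < deriv (deriv f) p ∧ ∀ y < θ, deriv (deriv f) y ≤ deriv (deriv f) p) := by
  have hdf : ∀ x, HasDerivAt f (deriv f x) x := fun x =>
    ((hf.differentiable (by norm_num)) x).hasDerivAt
  have hcd1 : ContDiff ℝ 1 (deriv f) := by
    have h2 : ContDiff ℝ (1 + 1) f := by
      have : ((2 : ℕ) : WithTop ℕ∞) = 1 + 1 := by norm_num
      exact this ▸ hf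
    exact (contDiff_succ_iff_deriv.mp h2).2.2
  have hdf' : ∀ x, HasDerivAt (deriv f) (deriv (deriv f) x) x := fun x =>
    ((hcd1.differentiable one_ne_zero) x).hasDerivAt
  -- f is integrable
  have hint : Integrable f := by
    by_contra h
    rw [integral_undef h] at hdensity
    norm_num at hdensity
  -- f is strictly monotone on (-∞, θ]
  have hmono : StrictMonoOn f (Iic θ) :=
    strictMonoOn_of_deriv_pos (convex_Iic θ) hucf.continuous.continuousOn
      (by intro x hx; rw [interior_Iic] at hx; exact hleft x hx)
  -- f tends to 0 at -∞
  have htendf : Tendsto f atBot (𝓝 (0 : ℝ)) := by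
    rw [Metric.tendsto_nhds]
    intro ε hε
    have hx0 : ∃ x₀ < θ, f x₀ < ε := by
      by_contra hcon
      push_neg at hcon
      set s : Set ℝ := Icc (θ - (2 / ε + 2)) (θ - 1) with hs
      have hsub : s ⊆ Iio θ := fun x hx => lt_of_le_of_lt hx.2 (by linarith)
      have hvol : (volume s).toReal = 2 / ε + 1 := by
        rw [hs, Real.volume_Icc]
        have h2ε : (0:ℝ) < 2 / ε := by positivity
        rw [ENNReal.toReal_ofReal (by linarith : (0:ℝ) ≤ θ - 1 - (θ - (2/ε + 2)))]
        ring
      have h1 : ε * (volume s).toReal ≤ ∫ x in s, f x := by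
        have := setIntegral_ge_of_const_le measurableSet_Icc
          (by rw [Real.volume_Icc]; exact ENNReal.ofReal_ne_top)
          (fun x hx => hcon x (hsub hx)) hint.integrableOn
        rw [measureReal_def, smul_eq_mul, mul_comm] at this
        exact this
      have h2 : ∫ x in s, f x ≤ ∫ x, f x :=
        setIntegral_le_integral hint (Filter.Eventually.of_forall hnonneg)
      rw [hdensity] at h2
      rw [hvol] at h1
      have hεne : ε ≠ 0 := ne_of_gt hε
      have : ε * (2 / ε + 1) = 2 + ε := by field_simp
      nlinarith
    obtain ⟨x₀, hx₀θ, hx₀ε⟩ := hx0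
    filter_upwards [eventually_le_atBot x₀] with x hx
    have hfle : f x ≤ f x₀ := by
      rcases eq_or_lt_of_le hx with rfl | hlt
      · exact le_rfl
      · exact (hmono (le_of_lt (lt_trans hlt hx₀θ)) hx₀θ.le hlt).le
    rw [Real.dist_eq, sub_zero, abs_of_nonneg (hnonneg x)]
    linarith
  -- f' is eventually small at -∞
  have hf'small : ∀ ε : ℝ, 0 < ε → ∀ᶠ x in atBot, deriv f x < ε := fun ε hε =>
    barbalat_atBot hdf hucf' htendf hε
  -- f' tends to 0 at -∞
  have htendf' : Tendsto (deriv f) atBot (𝓝 (0 : ℝ)) := by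
    rw [Metric.tendsto_nhds]
    intro ε hε
    filter_upwards [hf'small ε hε, eventually_lt_atBot θ] with x h1 h2
    rw [Real.dist_eq, sub_zero, abs_of_nonneg (hleft x h2).le]
    exact h1
  -- f'' is eventually small at -∞
  have hf''small : ∀ ε : ℝ, 0 < ε → ∀ᶠ x in atBot, deriv (deriv f) x < ε := fun ε hε =>
    barbalat_atBot hdf' hucf'' htendf' hε
  -- there exists q < θ with f'' q > 0
  have hq : ∃ q < θ, 0 < deriv (deriv f) q := by
    by_contra hc
    push_neg at hc
    have hanti : AntitoneOn (deriv f) (Iic θ) :=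
      antitoneOn_of_deriv_nonpos (convex_Iic θ) hucf'.continuous.continuousOn
        (fun x _ => ((hcd1.differentiable one_ne_zero) x).differentiableWithinAt)
        (by intro x hx; rw [interior_Iic] at hx; exact hc x hx)
    set c := deriv f (θ - 1) with hcdef
    have hcpos : 0 < c := hleft _ (by linarith)
    obtain ⟨x, h1, h2⟩ := ((hf'small c hcpos).and (eventually_le_atBot (θ - 1))).exists
    have h3 : c ≤ deriv f x := hanti (by simp; linarith : x ∈ Iic θ) (by simp : (θ:ℝ) - 1 ∈ Iic θ) h2
    linarith
  obtain ⟨q, hqθ, hqpos⟩ := hq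
  constructor
  · -- inflection point via IVT
    have hsub := intermediate_value_Icc' hqθ.le hucf''.continuous.continuousOn
    have h0mem : (0 : ℝ) ∈ Icc (deriv (deriv f) θ) (deriv (deriv f) q) := ⟨hmode.le, hqpos.le⟩
    obtain ⟨x, hxmem, hx0⟩ := hsub h0mem
    refine ⟨x, ?_, hx0⟩
    rcases eq_or_lt_of_le hxmem.2 with rfl | hlt
    · rw [hx0] at hmode; exact absurd hmode (lt_irrefl 0)
    · exact hlt
  · -- maximum of f'' on (-∞, θ)
    obtain ⟨M, hM⟩ := Filter.eventually_atBot.mp (hf''small _ hqpos)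
    set M' := min M q with hM'
    have hM'q : M' ≤ q := min_le_right _ _
    have hqmem : q ∈ Icc M' θ := ⟨hM'q, hqθ.le⟩
    obtain ⟨p, hpmem, hpmax⟩ := isCompact_Icc.exists_isMaxOn ⟨q, hqmem⟩
      hucf''.continuous.continuousOn
    have hgp : 0 < deriv (deriv f) p := lt_of_lt_of_le hqpos (hpmax hqmem)
    have hpθ : p < θ := by
      rcases eq_or_lt_of_le hpmem.2 with rfl | hlt
      · exact absurd hgp (not_lt.mpr hmode.le)
      · exact hlt
    refine ⟨p, hpθ, hgp, fun y hy => ?_⟩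
    by_cases hyM : M' ≤ y
    · exact hpmax ⟨hyM, hy.le⟩
    · push_neg at hyM
      have : deriv (deriv f) y < deriv (deriv f) q :=
        hM y (le_trans hyM.le (min_le_left _ _))
      exact le_trans this.le (hpmax hqmem)
end

section
/- Let (Ω, 𝓕, P) be a probability space and let g : ℝ → ℝ be uniformly continuous with a unique maximizer θ (g(x) < g(θ) for all x ≠ θ, and g(θ) = sup_x g(x)), with g(θ) > 0 and g(x) → 0 as x → ±∞. Let r ∈ ℕ and let (h_n) be a sequence of positive reals with n · h_n^{2r+2} → ∞. For each n, let G_n : Ω → ℝ → ℝ and let T_n : Ω → ℝ satisfy G_n(ω)(T_n(ω)) = sup_x G_n(ω)(x) for all ω. Assume there exist constants C₁, C₂ > 0 such that for every ε > 0 the set {ω : sup_x |G_n(ω)(x) - g(x)| > ε} is measurable and, for all sufficiently large n, P({ω : sup_x |G_n(ω)(x) - g(x)| > ε}) ≤ C₁ exp(-C₂ n h_n^{2r+2}). Assume also that for every ε > 0 the set {ω : |T_n(ω) - θ| > ε} is measurable. Then for every ε > 0, P({ω : |T_n(ω) - θ| > ε}) → 0 as n → ∞. -/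
open MeasureTheory Filter

/-- Consistency of the sample maximizer (Theorem 2): if `g` is uniformly continuous with a
unique positive maximum at `θ` and vanishes at `±∞`, `T n ω` maximizes `G n ω`, and the
uniform deviation `sup_x |G n ω x - g x|` exceeds any `ε > 0` with probability at most
`C₁ exp(-C₂ n h_n^{2r+2})` for large `n`, where `n h_n^{2r+2} → ∞`, then `T n → θ`
in probability. -/
theorem sample_maximizer_consistency
    {Ω : Type*} [MeasurableSpace Ω] (P : Measure Ω) [IsProbabilityMeasure P]
    (g : ℝ → ℝ) (θ : ℝ) (r : ℕ) (hband : ℕ → ℝ)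
    (G : ℕ → Ω → ℝ → ℝ) (T : ℕ → Ω → ℝ) (C₁ C₂ : ℝ)
    (hguc : UniformContinuous g)
    (hmax : ∀ x ≠ θ, g x < g θ)
    (hsup : g θ = ⨆ x, g x)
    (hgpos : 0 < g θ)
    (htop : Tendsto g atTop (nhds 0))
    (hbot : Tendsto g atBot (nhds 0))
    (hbandpos : ∀ n, 0 < hband n)
    (hbandlim : Tendsto (fun n : ℕ => (n : ℝ) * hband n ^ (2 * r + 2)) atTop atTop)
    (hT : ∀ n ω, G n ω (T n ω) = ⨆ x, G n ω x)
    (hC₁ : 0 < C₁) (hC₂ : 0 < C₂)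
    (hmeasG : ∀ n : ℕ, ∀ ε > (0 : ℝ), MeasurableSet {ω | ∃ x, ε < |G n ω x - g x|})
    (hbound : ∀ ε > (0 : ℝ), ∃ N : ℕ, ∀ n ≥ N,
        (P {ω | ∃ x, ε < |G n ω x - g x|}).toReal ≤
          C₁ * Real.exp (-C₂ * n * hband n ^ (2 * r + 2)))
    (hmeasT : ∀ n : ℕ, ∀ ε > (0 : ℝ), MeasurableSet {ω | ε < |T n ω - θ|}) :
    ∀ ε > (0 : ℝ),
      Tendsto (fun n : ℕ => (P {ω | ε < |T n ω - θ|}).toReal) atTop (nhds 0) := by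
  intro ε hε
  -- g is bounded above by g θ
  have hgle : ∀ x, g x ≤ g θ := by
    intro x
    rcases eq_or_ne x θ with h | h
    · simp [h]
    · exact (hmax x h).le
  -- tail bounds
  obtain ⟨A, hA⟩ := (eventually_atTop.mp (htop.eventually_lt_const (half_pos hgpos)))
  obtain ⟨B, hB⟩ := (eventually_atBot.mp (hbot.eventually_lt_const (half_pos hgpos)))
  -- a level d < g θ dominating g outside the ε-ball around θ
  have hd : ∃ d, d < g θ ∧ g θ / 2 ≤ d ∧ ∀ x, ε < |x - θ| → g x ≤ d := by
    set C : Set ℝ := Set.Icc B A ∩ {x | ε ≤ |x - θ|} with hC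
    have hCc : IsCompact C :=
      isCompact_Icc.inter_right
        (isClosed_le continuous_const ((continuous_id.sub continuous_const).abs))
    by_cases hne : C.Nonempty
    · obtain ⟨x₀, hx₀C, hx₀max⟩ := hCc.exists_isMaxOn hne hguc.continuous.continuousOn
      have hx₀ne : x₀ ≠ θ := by
        intro h
        have : ε ≤ |x₀ - θ| := hx₀C.2
        rw [h] at this; simp at this; linarith
      refine ⟨max (g x₀) (g θ / 2), ?_, le_max_right _ _, ?_⟩
      · exact max_lt (hmax x₀ hx₀ne) (by linarith)
      · intro x hx
        by_cases hxI : x ∈ Set.Icc B A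
        · have hxC : x ∈ C := ⟨hxI, le_of_lt hx⟩
          exact le_trans (hx₀max hxC) (le_max_left _ _)
        · rw [Set.mem_Icc, not_and_or, not_le, not_le] at hxI
          rcases hxI with h | h
          · exact le_trans (hB x h.le).le (le_max_right _ _)
          · exact le_trans (hA x h.le).le (le_max_right _ _)
    · refine ⟨g θ / 2, by linarith, le_refl _, ?_⟩
      intro x hx
      by_cases hxI : x ∈ Set.Icc B A
      · exact absurd ⟨hxI, hx.le⟩ (fun h => hne ⟨x, h⟩)
      · rw [Set.mem_Icc, not_and_or, not_le, not_le] at hxI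
        rcases hxI with h | h
        · exact (hB x h.le).le
        · exact (hA x h.le).le
  obtain ⟨d, hdlt, hdge, hdprop⟩ := hd
  set δ : ℝ := (g θ - d) / 3 with hδdef
  have hδ : 0 < δ := by simp only [hδdef]; linarith
  -- inclusion of events
  have hsub : ∀ n, {ω | ε < |T n ω - θ|} ⊆ {ω | ∃ x, δ < |G n ω x - g x|} := by
    intro n ω hω
    by_contra hcon
    simp only [Set.mem_setOf_eq, not_exists, not_lt] at hcon
    have hbdd : BddAbove (Set.range (G n ω)) := by
      refine ⟨g θ + δ, ?_⟩
      rintro _ ⟨x, rfl⟩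
      have h1 := (abs_le.mp (hcon x)).2
      have h2 := hgle x
      linarith
    have h1 : G n ω θ ≤ G n ω (T n ω) := by
      rw [hT n ω]; exact le_ciSup hbdd θ
    have h2 := abs_le.mp (hcon (T n ω))
    have h3 := abs_le.mp (hcon θ)
    have h4 : g θ - 3 * δ < g (T n ω) := by
      have : g θ - 3 * δ = d := by simp only [hδdef]; ring
      have h5 : d ≤ g θ - 2 * δ := by simp only [hδdef]; linarith
      linarith
    have h6 : g (T n ω) ≤ d := hdprop _ hω
    have : g θ - 3 * δ = d := by simp only [hδdef]; ring
    linarith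
  obtain ⟨N, hN⟩ := hbound δ hδ
  have hle : ∀ n ≥ N, (P {ω | ε < |T n ω - θ|}).toReal ≤
      C₁ * Real.exp (-C₂ * n * hband n ^ (2 * r + 2)) := by
    intro n hn
    refine le_trans ?_ (hN n hn)
    exact ENNReal.toReal_mono (measure_ne_top P _) (measure_mono (hsub n))
  -- the bound tends to 0
  have hexp : Tendsto (fun n : ℕ => C₁ * Real.exp (-C₂ * n * hband n ^ (2 * r + 2)))
      atTop (nhds 0) := by
    have h1 : Tendsto (fun n : ℕ => -C₂ * n * hband n ^ (2 * r + 2)) atTop atBot := by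
      have h2 : Tendsto (fun n : ℕ => C₂ * ((n : ℝ) * hband n ^ (2 * r + 2))) atTop atTop :=
        hbandlim.const_mul_atTop hC₂
      have h3 := tendsto_neg_atTop_atBot.comp h2
      exact h3.congr (fun n => by simp [Function.comp]; ring)
    have h4 := (Real.tendsto_exp_atBot.comp h1).const_mul C₁
    simpa using h4
  refine squeeze_zero' (Eventually.of_forall fun n => ENNReal.toReal_nonneg)
    (eventually_atTop.mpr ⟨N, hle⟩) hexp
end

section
/- Let μ ∈ ℝ and σ > 0, and let f : (0, ∞) → ℝ be the Log-Normal density f(x) = exp(-(log x - μ)²/(2σ²)) / (x σ √(2π)), with mode m = exp(μ - σ²). Then the second derivative f'' attains its maximum over (m, ∞) uniquely at the point p_r = exp(μ - 2σ² + σ√(3 + σ²)), and attains its maximum over (0, m) uniquely at the point p_l = exp(μ - 2σ² - σ√(3 + σ²)). That is, f''(x) ≤ f''(p_r) for all x > m with equality only at x = p_r, and f''(x) ≤ f''(p_l) for all 0 < x < m with equality only at x = p_l. -/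
open Real

noncomputable def LNh (μ σ t : ℝ) : ℝ :=
  (σ * Real.sqrt (2*Real.pi))⁻¹ * Real.exp (-(t-μ)^2/(2*σ^2) - 3*t) *
    (((t-μ)/σ^2)^2 + 3*((t-μ)/σ^2) + 2 - 1/σ^2)

noncomputable def LNh' (μ σ t : ℝ) : ℝ :=
  (σ * Real.sqrt (2*Real.pi))⁻¹ * Real.exp (-(t-μ)^2/(2*σ^2) - 3*t) *
    (-((t - (μ-2*σ^2)) * (t - (μ-2*σ^2+σ*Real.sqrt (3+σ^2))) *
        (t - (μ-2*σ^2-σ*Real.sqrt (3+σ^2)))) / σ^6)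

noncomputable def LNF (μ σ x : ℝ) : ℝ :=
  Real.exp (-(Real.log x - μ) ^ 2 / (2 * σ ^ 2)) / (x * σ * Real.sqrt (2 * Real.pi))

noncomputable def LNF1 (μ σ x : ℝ) : ℝ :=
  Real.exp (-(Real.log x - μ) ^ 2 / (2 * σ ^ 2)) * (-(Real.log x - μ)/σ^2 - 1) /
    (x^2 * (σ * Real.sqrt (2 * Real.pi)))

lemma hasDerivAt_LNF (μ σ x : ℝ) (hσ : 0 < σ) (hx : 0 < x) :
    HasDerivAt (LNF μ σ) (LNF1 μ σ x) x := by
  have hK : 0 < σ * Real.sqrt (2 * Real.pi) :=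
    mul_pos hσ (Real.sqrt_pos.mpr (by positivity))
  have hq : HasDerivAt (fun y => -(Real.log y - μ) ^ 2 / (2 * σ ^ 2))
      (-(2 * (Real.log x - μ) * x⁻¹) / (2 * σ ^ 2)) x := by
    have h1 : HasDerivAt (fun y => Real.log y - μ) x⁻¹ x :=
      (Real.hasDerivAt_log hx.ne').sub_const μ
    have h2 := (h1.pow 2).neg.div_const (2 * σ ^ 2)
    simpa [mul_comm, mul_assoc, mul_left_comm] using h2
  have hnum := hq.exp
  have hden : HasDerivAt (fun y => y * σ * Real.sqrt (2 * Real.pi))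
      (σ * Real.sqrt (2 * Real.pi)) x := by
    simpa [mul_assoc] using (hasDerivAt_id x).mul_const (σ * Real.sqrt (2 * Real.pi))
  have h := hnum.div hden (by positivity)
  refine h.congr_deriv ?_
  unfold LNF1
  field_simp

lemma hasDerivAt_LNF1 (μ σ x : ℝ) (hσ : 0 < σ) (hx : 0 < x) :
    HasDerivAt (LNF1 μ σ) (LNh μ σ (Real.log x)) x := by
  have hK : 0 < σ * Real.sqrt (2 * Real.pi) :=
    mul_pos hσ (Real.sqrt_pos.mpr (by positivity))
  have hq : HasDerivAt (fun y => -(Real.log y - μ) ^ 2 / (2 * σ ^ 2))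
      (-(2 * (Real.log x - μ) * x⁻¹) / (2 * σ ^ 2)) x := by
    have h1 : HasDerivAt (fun y => Real.log y - μ) x⁻¹ x :=
      (Real.hasDerivAt_log hx.ne').sub_const μ
    have h2 := (h1.pow 2).neg.div_const (2 * σ ^ 2)
    simpa [mul_comm, mul_assoc, mul_left_comm] using h2
  have hψ : HasDerivAt (fun y => -(Real.log y - μ)/σ^2 - 1) (-x⁻¹/σ^2) x := by
    have h1 : HasDerivAt (fun y => Real.log y - μ) x⁻¹ x :=
      (Real.hasDerivAt_log hx.ne').sub_const μ
    exact (h1.neg.div_const (σ^2)).sub_const 1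
  have hnum := hq.exp.mul hψ
  have hden : HasDerivAt (fun y => y^2 * (σ * Real.sqrt (2 * Real.pi)))
      ((2*x) * (σ * Real.sqrt (2 * Real.pi))) x := by
    simpa using (hasDerivAt_pow 2 x).mul_const (σ * Real.sqrt (2 * Real.pi))
  have h := hnum.div hden (by positivity)
  refine h.congr_deriv ?_
  unfold LNh
  have hex : Real.exp (-(Real.log x - μ)^2/(2*σ^2) - 3*Real.log x)
      = Real.exp (-(Real.log x - μ)^2/(2*σ^2)) * (x⁻¹)^3 := by
    rw [Real.exp_sub]
    rw [show (3:ℝ) * Real.log x = (3:ℕ) * Real.log x by norm_num,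
      Real.exp_nat_mul, Real.exp_log hx]
    rw [inv_pow]
    rw [div_eq_mul_inv]
  rw [hex]
  simp only [Pi.mul_apply]
  field_simp
  ring

lemma hasDerivAt_LNh (μ σ t : ℝ) (hσ : 0 < σ) :
    HasDerivAt (LNh μ σ) (LNh' μ σ t) t := by
  have hR : (Real.sqrt (3+σ^2))^2 = 3+σ^2 := Real.sq_sqrt (by positivity)
  have hφ : HasDerivAt (fun y => -(y-μ)^2/(2*σ^2) - 3*y)
      (-(2*(t-μ))/(2*σ^2) - 3) t := by
    have h1 : HasDerivAt (fun y : ℝ => y - μ) 1 t := (hasDerivAt_id t).sub_const μ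
    have h2 := ((h1.pow 2).neg.div_const (2*σ^2)).sub ((hasDerivAt_id t).const_mul 3)
    simpa [Pi.sub_def, mul_comm, mul_assoc, mul_left_comm] using h2
  have hB : HasDerivAt (fun y => ((y-μ)/σ^2)^2 + 3*((y-μ)/σ^2) + 2 - 1/σ^2)
      (2*((t-μ)/σ^2)*(1/σ^2) + 3*(1/σ^2)) t := by
    have h1 : HasDerivAt (fun y : ℝ => (y-μ)/σ^2) (1/σ^2) t := by
      simpa [div_eq_mul_inv] using (((hasDerivAt_id t).sub_const μ).div_const (σ^2))
    have h2 := (((h1.pow 2).add (h1.const_mul 3)).add_const 2).sub_const (1/σ^2)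
    simpa [mul_comm, mul_assoc, mul_left_comm] using h2
  have h := ((hφ.exp.const_mul ((σ * Real.sqrt (2*Real.pi))⁻¹)).mul hB)
  refine h.congr_deriv ?_
  unfold LNh'
  have hσ2 : σ^2 ≠ 0 := by positivity
  set E := Real.exp (-(t-μ)^2/(2*σ^2) - 3*t)
  set C := (σ * Real.sqrt (2*Real.pi))⁻¹
  set R := Real.sqrt (3+σ^2)
  have key : (t - (μ-2*σ^2)) * (t - (μ-2*σ^2+σ*R)) * (t - (μ-2*σ^2-σ*R))
      = (t-(μ-2*σ^2)) * ((t-(μ-2*σ^2))^2 - σ^2*(3+σ^2)) := by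
    linear_combination (-(t-(μ-2*σ^2)) * σ^2) * hR
  rw [key]
  field_simp
  ring

lemma deriv2_eq (μ σ : ℝ) (hσ : 0 < σ) (f : ℝ → ℝ)
    (hf : ∀ x : ℝ, 0 < x →
      f x = Real.exp (-(Real.log x - μ) ^ 2 / (2 * σ ^ 2)) / (x * σ * Real.sqrt (2 * Real.pi)))
    (x : ℝ) (hx : 0 < x) :
    deriv (deriv f) x = LNh μ σ (Real.log x) := by
  have hd1 : ∀ y, 0 < y → deriv f y = LNF1 μ σ y := by
    intro y hy
    have hev : f =ᶠ[nhds y] LNF μ σ := by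
      filter_upwards [Ioi_mem_nhds hy] with z hz using hf z hz
    rw [hev.deriv_eq, (hasDerivAt_LNF μ σ y hσ hy).deriv]
  have hev2 : deriv f =ᶠ[nhds x] LNF1 μ σ := by
    filter_upwards [Ioi_mem_nhds hx] with z hz using hd1 z hz
  rw [hev2.deriv_eq, (hasDerivAt_LNF1 μ σ x hσ hx).deriv]

/-- For the Log-Normal density with parameters `μ` and `σ > 0` and mode `m = exp(μ - σ²)`,
the second derivative `f''` attains its maximum over `(m, ∞)` uniquely at
`p_r = exp(μ - 2σ² + σ√(3 + σ²))`, and over `(0, m)` uniquely at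
`p_l = exp(μ - 2σ² - σ√(3 + σ²))`. -/
theorem logNormal_points_of_max_convexity
    (μ σ : ℝ) (hσ : 0 < σ) (f : ℝ → ℝ)
    (hf : ∀ x : ℝ, 0 < x →
      f x = Real.exp (-(Real.log x - μ) ^ 2 / (2 * σ ^ 2)) / (x * σ * Real.sqrt (2 * Real.pi))) :
    (∀ x : ℝ, Real.exp (μ - σ ^ 2) < x →
        deriv (deriv f) x ≤
          deriv (deriv f) (Real.exp (μ - 2 * σ ^ 2 + σ * Real.sqrt (3 + σ ^ 2)))) ∧
    (∀ x : ℝ, Real.exp (μ - σ ^ 2) < x →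
        deriv (deriv f) x =
          deriv (deriv f) (Real.exp (μ - 2 * σ ^ 2 + σ * Real.sqrt (3 + σ ^ 2))) →
        x = Real.exp (μ - 2 * σ ^ 2 + σ * Real.sqrt (3 + σ ^ 2))) ∧
    (∀ x : ℝ, 0 < x → x < Real.exp (μ - σ ^ 2) →
        deriv (deriv f) x ≤
          deriv (deriv f) (Real.exp (μ - 2 * σ ^ 2 - σ * Real.sqrt (3 + σ ^ 2)))) ∧
    (∀ x : ℝ, 0 < x → x < Real.exp (μ - σ ^ 2) →
        deriv (deriv f) x =
          deriv (deriv f) (Real.exp (μ - 2 * σ ^ 2 - σ * Real.sqrt (3 + σ ^ 2))) →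
        x = Real.exp (μ - 2 * σ ^ 2 - σ * Real.sqrt (3 + σ ^ 2))) := by
  set R := Real.sqrt (3 + σ ^ 2) with hRdef
  have hR : R ^ 2 = 3 + σ ^ 2 := Real.sq_sqrt (by positivity)
  have hRpos : 0 < R := Real.sqrt_pos.mpr (by positivity)
  have hσR : σ < R := by nlinarith
  set t0 := μ - σ ^ 2 with ht0def
  set t2 := μ - 2 * σ ^ 2 with ht2def
  set tp := μ - 2 * σ ^ 2 + σ * R with htpdef
  set tm := μ - 2 * σ ^ 2 - σ * R with htmdef
  have hσR0 : 0 < σ * R := mul_pos hσ hRpos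
  have htm2 : tm < t2 := by simp only [htmdef, ht2def]; linarith
  have ht20 : t2 < t0 := by simp only [htmdef, ht2def, ht0def]; nlinarith
  have ht0p : t0 < tp := by simp only [htpdef, ht0def]; nlinarith
  set H := LNh μ σ with hHdef
  have hC : 0 < (σ * Real.sqrt (2*Real.pi))⁻¹ := by
    have : 0 < Real.sqrt (2*Real.pi) := Real.sqrt_pos.mpr (by positivity)
    positivity
  have hcont : Continuous H := by
    have : Differentiable ℝ H := fun t => (hasDerivAt_LNh μ σ t hσ).differentiableAt
    exact this.continuous
  -- sign facts about LNh'
  have hsign : ∀ t : ℝ, 0 < -((t - t2) * (t - tp) * (t - tm)) → 0 < LNh' μ σ t := by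
    intro t h
    unfold LNh'
    have he : 0 < Real.exp (-(t-μ)^2/(2*σ^2) - 3*t) := Real.exp_pos _
    exact mul_pos (mul_pos hC he) (div_pos h (by positivity))
  have hsign' : ∀ t : ℝ, -((t - t2) * (t - tp) * (t - tm)) < 0 → LNh' μ σ t < 0 := by
    intro t h
    unfold LNh'
    have he : 0 < Real.exp (-(t-μ)^2/(2*σ^2) - 3*t) := Real.exp_pos _
    exact mul_neg_of_pos_of_neg (mul_pos hC he) (div_neg_of_neg_of_pos h (by positivity))
  -- monotonicity
  have hmonoR : StrictMonoOn H (Set.Icc t0 tp) := by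
    apply strictMonoOn_of_deriv_pos (convex_Icc _ _) hcont.continuousOn
    intro t ht
    rw [interior_Icc] at ht
    rw [(hasDerivAt_LNh μ σ t hσ).deriv]
    apply hsign
    have h1 : 0 < t - t2 := by linarith [ht.1]
    have h2 : t - tp < 0 := by linarith [ht.2]
    have h3 : 0 < t - tm := by linarith [ht.1]
    nlinarith [mul_pos (mul_pos h1 (neg_pos.mpr h2)) h3]
  have hantiR : StrictAntiOn H (Set.Ici tp) := by
    apply strictAntiOn_of_deriv_neg (convex_Ici _) hcont.continuousOn
    intro t ht
    rw [interior_Ici] at ht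
    rw [(hasDerivAt_LNh μ σ t hσ).deriv]
    apply hsign'
    have h1 : 0 < t - t2 := by simp only [Set.mem_Ioi] at ht; linarith
    have h2 : 0 < t - tp := by simp only [Set.mem_Ioi] at ht; linarith
    have h3 : 0 < t - tm := by simp only [Set.mem_Ioi] at ht; linarith
    nlinarith [mul_pos (mul_pos h1 h2) h3]
  have hmonoL : StrictMonoOn H (Set.Iic tm) := by
    apply strictMonoOn_of_deriv_pos (convex_Iic _) hcont.continuousOn
    intro t ht
    rw [interior_Iic] at ht
    rw [(hasDerivAt_LNh μ σ t hσ).deriv]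
    apply hsign
    simp only [Set.mem_Iio] at ht
    have h1 : t - t2 < 0 := by linarith
    have h2 : t - tp < 0 := by linarith
    have h3 : t - tm < 0 := by linarith
    nlinarith [mul_pos (mul_pos (neg_pos.mpr h1) (neg_pos.mpr h2)) (neg_pos.mpr h3)]
  have hantiL : StrictAntiOn H (Set.Icc tm t2) := by
    apply strictAntiOn_of_deriv_neg (convex_Icc _ _) hcont.continuousOn
    intro t ht
    rw [interior_Icc] at ht
    rw [(hasDerivAt_LNh μ σ t hσ).deriv]
    apply hsign'
    have h1 : t - t2 < 0 := by linarith [ht.2]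
    have h2 : t - tp < 0 := by linarith [ht.2]
    have h3 : 0 < t - tm := by linarith [ht.1]
    nlinarith [mul_pos (mul_pos (neg_pos.mpr h1) (neg_pos.mpr h2)) h3]
  -- sign of H on [t2, t0)
  have hHneg : ∀ t : ℝ, t2 ≤ t → t < t0 → H t < 0 := by
    intro t h1 h2
    have hB : ((t-μ)/σ^2)^2 + 3*((t-μ)/σ^2) + 2 - 1/σ^2 < 0 := by
      have hs2 : (0:ℝ) < σ^2 := by positivity
      have e1 : (t-μ)/σ^2 + 1 = (t - t0)/σ^2 := by
        rw [ht0def]; field_simp; ring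
      have e2 : (t-μ)/σ^2 + 2 = (t - t2)/σ^2 := by
        rw [ht2def]; field_simp; ring
      have h3 : (t-μ)/σ^2 + 1 < 0 := by
        rw [e1]; exact div_neg_of_neg_of_pos (by linarith) hs2
      have h4 : 0 ≤ (t-μ)/σ^2 + 2 := by
        rw [e2]; exact div_nonneg (by linarith) hs2.le
      have h5 : ((t-μ)/σ^2 + 1) * ((t-μ)/σ^2 + 2) ≤ 0 :=
        mul_nonpos_of_nonpos_of_nonneg h3.le h4
      have h6 : 0 < 1/σ^2 := by positivity
      nlinarith
    have he : 0 < Real.exp (-(t-μ)^2/(2*σ^2) - 3*t) := Real.exp_pos _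
    exact mul_neg_of_pos_of_neg (mul_pos hC he) hB
  -- H tm > 0
  have hHtm : 0 < H tm := by
    have hB : 0 < ((tm-μ)/σ^2)^2 + 3*((tm-μ)/σ^2) + 2 - 1/σ^2 := by
      have h1 : tm - μ = -2*σ^2 - σ*R := by rw [htmdef]; ring
      rw [h1]
      have key : ((-2*σ^2 - σ*R)/σ^2)^2 + 3*((-2*σ^2 - σ*R)/σ^2) + 2 - 1/σ^2
          = (σ*R + σ^2 + 2)/σ^2 := by
        field_simp
        linear_combination hR
      rw [key]
      apply div_pos (by nlinarith) (by positivity)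
    have he : 0 < Real.exp (-(tm-μ)^2/(2*σ^2) - 3*tm) := Real.exp_pos _
    exact mul_pos (mul_pos hC he) hB
  -- transfer to x-space
  have hD2 : ∀ x : ℝ, 0 < x → deriv (deriv f) x = H (Real.log x) :=
    fun x hx => deriv2_eq μ σ hσ f hf x hx
  have hDp : deriv (deriv f) (Real.exp tp) = H tp := by
    rw [hD2 _ (Real.exp_pos _), Real.log_exp]
  have hDm : deriv (deriv f) (Real.exp tm) = H tm := by
    rw [hD2 _ (Real.exp_pos _), Real.log_exp]
  refine ⟨?_, ?_, ?_, ?_⟩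
  · intro x hx
    have hx0 : 0 < x := (Real.exp_pos _).trans hx
    have hlt : t0 < Real.log x := by
      have := Real.log_lt_log (Real.exp_pos t0) hx
      rwa [Real.log_exp] at this
    rw [hD2 x hx0, hDp]
    rcases le_or_gt (Real.log x) tp with h | h
    · rcases eq_or_lt_of_le h with h' | h'
      · rw [h']
      · exact (hmonoR ⟨hlt.le, h⟩ ⟨ht0p.le, le_refl _⟩ h').le
    · exact (hantiR Set.self_mem_Ici h.le h).le
  · intro x hx heq
    have hx0 : 0 < x := (Real.exp_pos _).trans hx
    have hlt : t0 < Real.log x := by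
      have := Real.log_lt_log (Real.exp_pos t0) hx
      rwa [Real.log_exp] at this
    rw [hD2 x hx0, hDp] at heq
    have hteq : Real.log x = tp := by
      rcases lt_trichotomy (Real.log x) tp with h | h | h
      · exact absurd heq (ne_of_lt (hmonoR ⟨hlt.le, h.le⟩ ⟨ht0p.le, le_refl _⟩ h))
      · exact h
      · exact absurd heq (ne_of_lt (hantiR Set.self_mem_Ici h.le h))
    rw [← Real.exp_log hx0, hteq]
  · intro x hx0 hx
    have hlt : Real.log x < t0 := by
      have := Real.log_lt_log hx0 hx
      rwa [Real.log_exp] at this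
    rw [hD2 x hx0, hDm]
    rcases lt_trichotomy (Real.log x) tm with h | h | h
    · exact (hmonoL h.le Set.self_mem_Iic h).le
    · rw [h]
    · rcases le_or_gt (Real.log x) t2 with h' | h'
      · exact (hantiL ⟨le_refl _, htm2.le⟩ ⟨h.le, h'⟩ h).le
      · exact ((hHneg _ h'.le hlt).trans hHtm).le
  · intro x hx0 hx heq
    have hlt : Real.log x < t0 := by
      have := Real.log_lt_log hx0 hx
      rwa [Real.log_exp] at this
    rw [hD2 x hx0, hDm] at heq
    have hteq : Real.log x = tm := by
      rcases lt_trichotomy (Real.log x) tm with h | h | h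
      · exact absurd heq (ne_of_lt (hmonoL h.le Set.self_mem_Iic h))
      · exact h
      · exfalso
        rcases le_or_gt (Real.log x) t2 with h' | h'
        · exact absurd heq (ne_of_gt (hantiL ⟨le_refl _, htm2.le⟩ ⟨h.le, h'⟩ h)).symm
        · exact absurd heq (ne_of_lt ((hHneg _ h'.le hlt).trans hHtm))
    rw [← Real.exp_log hx0, hteq]
end

section
/- Let ν > 0 and let f_ν : ℝ → ℝ be the Student's t density f_ν(x) = (Γ((ν+1)/2) / (√(νπ) Γ(ν/2))) · (1 + x²/ν)^{-(ν+1)/2}. Then the second derivative f_ν'' attains its maximum over (0, ∞) uniquely at x = √(3ν/(ν+2)); i.e., f_ν''(x) ≤ f_ν''(√(3ν)/√(ν+2)) for all x > 0, with equality only at x = √(3ν)/√(ν+2). By symmetry, over (-∞, 0) the maximum is attained uniquely at -√(3ν)/√(ν+2). -/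
open Real Set

/-- The second derivative of the Student's `t` density with `ν > 0` degrees of freedom
attains its maximum over `(0, ∞)` uniquely at `x = √(3ν/(ν+2))` and, by symmetry, over
`(-∞, 0)` uniquely at `x = -√(3ν/(ν+2))`. -/
theorem studentT_point_of_max_convexity
    (ν : ℝ) (hν : 0 < ν) (f : ℝ → ℝ)
    (hf : ∀ x : ℝ, f x = (Real.Gamma ((ν + 1) / 2) /
        (Real.sqrt (ν * Real.pi) * Real.Gamma (ν / 2))) *
        (1 + x ^ 2 / ν) ^ (-((ν + 1) / 2))) :
    (∀ x : ℝ, 0 < x →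
        deriv (deriv f) x ≤ deriv (deriv f) (Real.sqrt (3 * ν / (ν + 2)))) ∧
    (∀ x : ℝ, 0 < x →
        deriv (deriv f) x = deriv (deriv f) (Real.sqrt (3 * ν / (ν + 2))) →
        x = Real.sqrt (3 * ν / (ν + 2))) ∧
    (∀ x : ℝ, x < 0 →
        deriv (deriv f) x ≤ deriv (deriv f) (-Real.sqrt (3 * ν / (ν + 2)))) ∧
    (∀ x : ℝ, x < 0 →
        deriv (deriv f) x = deriv (deriv f) (-Real.sqrt (3 * ν / (ν + 2))) →
        x = -Real.sqrt (3 * ν / (ν + 2))) := by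
  have hν0 : (ν : ℝ) ≠ 0 := ne_of_gt hν
  set C : ℝ := Real.Gamma ((ν + 1) / 2) / (Real.sqrt (ν * Real.pi) * Real.Gamma (ν / 2)) with hCdef
  have hC0 : 0 < C :=
    div_pos (Real.Gamma_pos_of_pos (by linarith))
      (mul_pos (Real.sqrt_pos.2 (mul_pos hν Real.pi_pos)) (Real.Gamma_pos_of_pos (by linarith)))
  set p : ℝ := -((ν + 1) / 2) with hp
  set q : ℝ := -((ν + 5) / 2) with hq
  set K : ℝ := C * (ν + 1) / ν with hK
  have hK0 : 0 < K := div_pos (mul_pos hC0 (by linarith)) hν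
  set ψ : ℝ → ℝ := fun t => (1 + t / ν) ^ q * ((ν + 2) * t / ν - 1) with hψ
  have hu : ∀ x : ℝ, (0:ℝ) < 1 + x ^ 2 / ν := fun x => by positivity
  -- first derivative
  have hfx : f = fun x => C * (1 + x ^ 2 / ν) ^ p := funext hf
  have hd1 : ∀ x : ℝ, HasDerivAt (fun x : ℝ => 1 + x ^ 2 / ν) (2 * x / ν) x := by
    intro x
    have := ((hasDerivAt_pow 2 x).div_const ν).const_add 1
    simpa using this
  have hderiv1 : ∀ x : ℝ,
      HasDerivAt f ((C * p) * ((2 * x / ν) * (1 + x ^ 2 / ν) ^ (p - 1))) x := by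
    intro x
    have h2 := ((hd1 x).rpow_const (p := p) (Or.inl (ne_of_gt (hu x)))).const_mul C
    rw [hfx]
    convert h2 using 1
    · rfl
    · rfl
    ring
  have hdf : deriv f = fun x => (C * p) * ((2 * x / ν) * (1 + x ^ 2 / ν) ^ (p - 1)) :=
    funext fun x => (hderiv1 x).deriv
  -- second derivative
  have hderiv2 : ∀ x : ℝ, HasDerivAt (deriv f) (K * ψ (x ^ 2)) x := by
    intro x
    have h2 : HasDerivAt (fun x : ℝ => (1 + x ^ 2 / ν) ^ (p - 1))
        ((2 * x / ν) * (p - 1) * (1 + x ^ 2 / ν) ^ (p - 1 - 1)) x :=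
      (hd1 x).rpow_const (Or.inl (ne_of_gt (hu x)))
    have h3 : HasDerivAt (fun x : ℝ => 2 * x / ν) (2 / ν) x := by
      have := ((hasDerivAt_id x).const_mul (2:ℝ)).div_const ν
      simpa using this
    have h4 := (h3.mul h2).const_mul (C * p)
    rw [hdf]
    convert h4 using 1
    · rfl
    · rfl
    · rfl
    have e2 : p - 1 - 1 = q := by rw [hp, hq]; ring
    have e1 : (1 + x ^ 2 / ν) ^ (p - 1) = (1 + x ^ 2 / ν) ^ q * (1 + x ^ 2 / ν) := by
      rw [show p - 1 = q + 1 by rw [hq, hp]; ring, Real.rpow_add (hu x), Real.rpow_one]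
    simp only [hψ]
    rw [e2, e1]
    generalize (1 + x ^ 2 / ν) ^ q = w
    simp only [hK, hp]
    field_simp
    ring
  have hddf : deriv (deriv f) = fun x => K * ψ (x ^ 2) := funext fun x => (hderiv2 x).deriv
  -- derivative of ψ
  have hψd : ∀ t : ℝ, 0 ≤ t → HasDerivAt ψ
      ((1 + t / ν) ^ (q - 1) * ((ν + 3) * (3 * ν - (ν + 2) * t)) / (2 * ν ^ 2)) t := by
    intro t ht
    have hv : (0:ℝ) < 1 + t / ν := by positivity
    have h1 : HasDerivAt (fun t : ℝ => 1 + t / ν) (1 / ν) t := by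
      have := ((hasDerivAt_id t).div_const ν).const_add 1
      simpa using this
    have h2 := h1.rpow_const (p := q) (Or.inl (ne_of_gt hv))
    have h3 : HasDerivAt (fun t : ℝ => (ν + 2) * t / ν - 1) ((ν + 2) / ν) t := by
      have := (((hasDerivAt_id t).const_mul (ν + 2)).div_const ν).sub_const 1
      simpa using this
    have h4 := h2.mul h3
    convert h4 using 1
    · rfl
    · rfl
    · rfl
    have e1 : (1 + t / ν) ^ q = (1 + t / ν) ^ (q - 1) * (1 + t / ν) := by
      conv_lhs => rw [show q = (q - 1) + 1 by ring]
      rw [Real.rpow_add hv, Real.rpow_one]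
    rw [e1]
    generalize (1 + t / ν) ^ (q - 1) = w
    simp only [hq]
    field_simp
    ring
  set T : ℝ := 3 * ν / (ν + 2) with hT
  have hT0 : 0 < T := by positivity
  have hcont : ∀ t ∈ Ici (0:ℝ), ContinuousWithinAt ψ (Ici 0) t := fun t ht =>
    ((hψd t ht).differentiableAt.continuousAt).continuousWithinAt
  have hmono : StrictMonoOn ψ (Icc 0 T) := by
    apply strictMonoOn_of_deriv_pos (convex_Icc _ _)
    · exact fun t ht => ((hψd t ht.1).differentiableAt.continuousAt).continuousWithinAt
    · intro t ht
      rw [interior_Icc] at ht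
      rw [(hψd t ht.1.le).deriv]
      have ht0 : (0:ℝ) < t := ht.1
      have hv : (0:ℝ) < 1 + t / ν := by positivity
      have h5 : 0 < 3 * ν - (ν + 2) * t := by
        have := (lt_div_iff₀ (by linarith : (0:ℝ) < ν + 2)).1 ht.2
        linarith
      have hw := Real.rpow_pos_of_pos hv (q - 1)
      exact div_pos (mul_pos hw (mul_pos (by linarith) h5)) (by positivity)
  have hanti : StrictAntiOn ψ (Ici T) := by
    apply strictAntiOn_of_deriv_neg (convex_Ici _)
    · exact fun t ht => ((hψd t (le_trans hT0.le ht)).differentiableAt.continuousAt).continuousWithinAt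
    · intro t ht
      rw [interior_Ici] at ht
      rw [(hψd t (le_trans hT0.le ht.le)).deriv]
      have hv : (0:ℝ) < 1 + t / ν := by
        have : 0 ≤ t := le_trans hT0.le ht.le
        positivity
      have h5 : 3 * ν - (ν + 2) * t < 0 := by
        have := (div_lt_iff₀ (by linarith : (0:ℝ) < ν + 2)).1 ht
        linarith
      have hw := Real.rpow_pos_of_pos hv (q - 1)
      have : (1 + t / ν) ^ (q - 1) * ((ν + 3) * (3 * ν - (ν + 2) * t)) < 0 :=
        mul_neg_of_pos_of_neg hw (mul_neg_of_pos_of_neg (by linarith) h5)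
      exact div_neg_of_neg_of_pos this (by positivity)
  have key : ∀ t : ℝ, 0 ≤ t → t ≠ T → ψ t < ψ T := by
    intro t ht hne
    rcases lt_or_gt_of_ne hne with h | h
    · exact hmono ⟨ht, h.le⟩ ⟨hT0.le, le_refl T⟩ h
    · exact hanti (le_refl T) h.le h
  set s : ℝ := Real.sqrt T with hs
  have hs2 : s ^ 2 = T := Real.sq_sqrt hT0.le
  have hs0 : 0 < s := Real.sqrt_pos.2 hT0
  have main_le : ∀ x : ℝ, deriv (deriv f) x ≤ K * ψ T := by
    intro x
    rw [hddf]
    show K * ψ (x ^ 2) ≤ K * ψ T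
    by_cases hxT : x ^ 2 = T
    · rw [hxT]
    · exact le_of_lt (mul_lt_mul_of_pos_left (key _ (sq_nonneg x) hxT) hK0)
  have main_eq : ∀ x : ℝ, deriv (deriv f) x = K * ψ T → x ^ 2 = T := by
    intro x hx
    by_contra hxT
    have := mul_lt_mul_of_pos_left (key _ (sq_nonneg x) hxT) hK0
    rw [hddf] at hx
    simp only at hx
    linarith [this, hx.le, hx.ge]
  have hddfs : deriv (deriv f) s = K * ψ T := by
    rw [hddf]; show K * ψ (s ^ 2) = K * ψ T; rw [hs2]
  have hddfns : deriv (deriv f) (-s) = K * ψ T := by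
    rw [hddf]; show K * ψ ((-s) ^ 2) = K * ψ T; rw [neg_sq, hs2]
  refine ⟨?_, ?_, ?_, ?_⟩
  · intro x hx; rw [hddfs]; exact main_le x
  · intro x hx heq
    rw [hddfs] at heq
    have h2 := main_eq x heq
    calc x = Real.sqrt (x ^ 2) := (Real.sqrt_sq hx.le).symm
    _ = s := by rw [h2]
  · intro x hx; rw [hddfns]; exact main_le x
  · intro x hx heq
    rw [hddfns] at heq
    have h2 := main_eq x heq
    have : Real.sqrt (x ^ 2) = -x := by
      rw [Real.sqrt_sq_eq_abs, abs_of_neg hx]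
    rw [h2] at this
    linarith [this]
end

section
/- Let f : ℝ → ℝ be the standard Cauchy density f(x) = 1/(π(1 + x²)). Then: (i) the unique zero of f'' on (0, ∞) is x = 1/√3, and ∫_{-∞}^{1/√3} f(x) dx = 2/3; (ii) the unique maximizer of f'' on (0, ∞) is x = 1, and ∫_{-∞}^{1} f(x) dx = 3/4. That is, the cumulative distribution function of the standard Cauchy distribution evaluated at the right inflection point equals 2/3, and evaluated at the right point of maximum convexity equals 3/4. -/
open Real

lemma denom_pos (x : ℝ) : 0 < π * (1 + x ^ 2) := by positivity

lemma deriv1 (f : ℝ → ℝ) (hf : ∀ x : ℝ, f x = 1 / (π * (1 + x ^ 2))) :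
    deriv f = fun x => -(2 * π * x) / (π * (1 + x ^ 2)) ^ 2 := by
  funext x
  have hfe : f = fun x => (π * (1 + x ^ 2))⁻¹ := by funext y; rw [hf y, one_div]
  have h : HasDerivAt (fun x : ℝ => (π * (1 + x ^ 2))⁻¹)
      (-(π * (2 * x)) / (π * (1 + x ^ 2)) ^ 2) x := by
    have hb : HasDerivAt (fun x : ℝ => π * (1 + x ^ 2)) (π * (2 * x)) x := by
      have : HasDerivAt (fun x : ℝ => 1 + x ^ 2) (2 * x) x := by
        simpa using ((hasDerivAt_pow 2 x).const_add 1)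
      simpa using this.const_mul π
    exact hb.inv (ne_of_gt (denom_pos x))
  rw [hfe, h.deriv]; ring

lemma deriv2 (f : ℝ → ℝ) (hf : ∀ x : ℝ, f x = 1 / (π * (1 + x ^ 2))) (x : ℝ) :
    deriv (deriv f) x = 2 * (3 * x ^ 2 - 1) / (π * (1 + x ^ 2) ^ 3) := by
  rw [deriv1 f hf]
  have hu : HasDerivAt (fun x : ℝ => -(2 * π * x)) (-(2 * π)) x := by
    simpa using (hasDerivAt_id x).const_mul (-(2 * π))
  have hv : HasDerivAt (fun x : ℝ => (π * (1 + x ^ 2)) ^ 2)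
      (2 * (π * (1 + x ^ 2)) * (π * (2 * x))) x := by
    have hb : HasDerivAt (fun x : ℝ => π * (1 + x ^ 2)) (π * (2 * x)) x := by
      have : HasDerivAt (fun x : ℝ => 1 + x ^ 2) (2 * x) x := by
        simpa using ((hasDerivAt_pow 2 x).const_add 1)
      simpa using this.const_mul π
    simpa [mul_comm] using hb.fun_pow 2
  have h := hu.fun_div hv (by positivity)
  rw [h.deriv]
  have hπ := pi_pos
  field_simp
  ring

lemma cdf_eval (f : ℝ → ℝ) (hf : ∀ x : ℝ, f x = 1 / (π * (1 + x ^ 2))) (a : ℝ) :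
    ∫ x in Set.Iic a, f x = (arctan a + π / 2) / π := by
  have : ∀ x : ℝ, f x = π⁻¹ * (1 + x ^ 2)⁻¹ := by
    intro x; rw [hf x]; field_simp
  simp_rw [this]
  rw [MeasureTheory.integral_const_mul, integral_Iic_inv_one_add_sq]
  field_simp

/-- For the standard Cauchy density `f x = 1/(π(1 + x²))`:
(i) the unique zero of `f''` on `(0, ∞)` is `1/√3`, and the cdf there equals `2/3`;
(ii) the unique maximizer of `f''` on `(0, ∞)` is `1`, and the cdf there equals `3/4`. -/
theorem cauchy_delimiting_points
    (f : ℝ → ℝ) (hf : ∀ x : ℝ, f x = 1 / (Real.pi * (1 + x ^ 2))) :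
    (deriv (deriv f) (1 / Real.sqrt 3) = 0 ∧
      (∀ x : ℝ, 0 < x → deriv (deriv f) x = 0 → x = 1 / Real.sqrt 3) ∧
      ∫ x in Set.Iic (1 / Real.sqrt 3), f x = 2 / 3) ∧
    ((∀ x : ℝ, 0 < x → deriv (deriv f) x ≤ deriv (deriv f) 1) ∧
      (∀ x : ℝ, 0 < x → deriv (deriv f) x = deriv (deriv f) 1 → x = 1) ∧
      ∫ x in Set.Iic (1 : ℝ), f x = 3 / 4) := by
  have hπ := pi_pos
  have hs3 : (0:ℝ) < Real.sqrt 3 := by positivity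
  have hsq : (Real.sqrt 3) ^ 2 = 3 := Real.sq_sqrt (by norm_num)
  refine ⟨⟨?_, ?_, ?_⟩, ?_, ?_, ?_⟩
  · rw [deriv2 f hf]
    have : 3 * (1 / Real.sqrt 3) ^ 2 - 1 = 0 := by
      rw [div_pow, hsq]; norm_num
    rw [this]; simp
  · intro x hx h
    rw [deriv2 f hf] at h
    have hd : (0:ℝ) < π * (1 + x ^ 2) ^ 3 := by positivity
    have h3 : 3 * x ^ 2 - 1 = 0 := by
      have := (div_eq_zero_iff.mp h).resolve_right (ne_of_gt hd)
      linarith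
    have hx2 : x ^ 2 = 1 / 3 := by linarith
    have : x = Real.sqrt (1 / 3) := by
      rw [← Real.sqrt_sq hx.le, hx2]
    rw [this, one_div, Real.sqrt_inv, one_div]
  · rw [cdf_eval f hf]
    have : arctan (1 / Real.sqrt 3) = π / 6 := by
      rw [← Real.tan_pi_div_six, Real.arctan_tan] <;> linarith
    rw [this]; field_simp; ring
  · intro x hx
    rw [deriv2 f hf, deriv2 f hf]
    have hd : (0:ℝ) < π * (1 + x ^ 2) ^ 3 := by positivity
    have hd1 : (0:ℝ) < π * (1 + (1:ℝ) ^ 2) ^ 3 := by positivity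
    rw [div_le_div_iff₀ hd hd1]
    nlinarith [sq_nonneg (x^2 - 1), sq_nonneg x, mul_pos hπ (mul_pos hπ hπ), sq_nonneg (x^2-1), mul_nonneg (sq_nonneg (x^2-1)) (by positivity : (0:ℝ) ≤ x^2+5)]
  · intro x hx h
    rw [deriv2 f hf, deriv2 f hf] at h
    have hd : (0:ℝ) < π * (1 + x ^ 2) ^ 3 := by positivity
    have hd1 : (0:ℝ) < π * (1 + (1:ℝ) ^ 2) ^ 3 := by positivity
    rw [div_eq_div_iff (ne_of_gt hd) (ne_of_gt hd1)] at h
    have key : (x ^ 2 - 1) ^ 2 * (x ^ 2 + 5) = 0 := by nlinarith [hπ]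
    have : x ^ 2 = 1 := by
      have h5 : (0:ℝ) < x ^ 2 + 5 := by positivity
      have := mul_eq_zero.mp key
      rcases this with h1 | h2
      · nlinarith [sq_abs (x^2-1)]
      · linarith
    nlinarith
  · rw [cdf_eval f hf, Real.arctan_one]
    field_simp; ring
end
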